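/- arXiv:1601.06952 — 3 statements merged into one kernel-verified Lean document; each statement's English description precedes it below -/
import Mathlib

section
/- The Hilbert metric on a properly convex open domain Ω is a metric: for p,q ∈ Ω, d_Ω(p,q) = log|[o,s,q,p]| where o,s are the endpoints of the maximal open segment of Ω through p and q (with o,q separating p,s), satisfies the axioms of a metric (nonnegativity, symmetry, identity of indiscernibles, triangle inequality) on Ω. -/
/-!
The Hilbert distance is the symmetrisation `F(p,q) + F(q,p)` of the Funk distance
`F(p,q) = log (σ / (σ - 1))`, where `σ > 1` is the parameter at which the ray from `p` through `q`
leaves `Ω`; so it suffices that `F` is positive and satisfies the triangle inequality. If `a`, `b`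
are the exit parameters of `p → q` and `q → r`, the segment joining the two exit points lies in
the convex set `closure Ω` and crosses the line `pr` at parameter `ab / (a + b - 1)`. Hence the
exit parameter `c` of `p → r` satisfies `c ≥ ab / (a + b - 1)`, which is exactly
`c / (c - 1) ≤ a / (a - 1) · b / (b - 1)`.
-/

open Set

/-- `d` is the Hilbert distance on the convex open set `Ω`: `d p p = 0`, and for distinct
`p q ∈ Ω`, whenever `o, s` are the boundary endpoints of the maximal segment of `Ω` through
`p` and `q` (with the order `o, p, q, s` on the line), `d p q` is the logarithm of the cross
ratio `[o,s,q,p]`. -/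
def IsHilbertDistOn {n : ℕ} (Ω : Set (EuclideanSpace ℝ (Fin n)))
    (d : EuclideanSpace ℝ (Fin n) → EuclideanSpace ℝ (Fin n) → ℝ) : Prop :=
  (∀ p ∈ Ω, d p p = 0) ∧
  (∀ p ∈ Ω, ∀ q ∈ Ω, p ≠ q → ∀ o s : EuclideanSpace ℝ (Fin n),
    o ∈ frontier Ω → s ∈ frontier Ω →
    p ∈ openSegment ℝ o q → q ∈ openSegment ℝ p s →
    d p q = Real.log ((dist o q / dist o p) * (dist s p / dist s q)))

open AffineMap

section Funk

variable {E : Type*} [NormedAddCommGroup E] [NormedSpace ℝ E] {Ω : Set E} {p q r : E}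

noncomputable def exitParam (Ω : Set E) (p q : E) : ℝ :=
  sSup (lineMap p q ⁻¹' Ω)

/-- The Funk distance `log (|pa| / |qa|)`, for the exit point `a = lineMap p q σ`. -/
noncomputable def funkDist (Ω : Set E) (p q : E) : ℝ :=
  Real.log (exitParam Ω p q / (exitParam Ω p q - 1))

theorem mem_openSegment_lineMap (x y : E) {t : ℝ} (ht : 1 < t) :
    y ∈ openSegment ℝ x (lineMap x y t) := by
  have ht0 : 0 < t := one_pos.trans ht
  have := lineMap_mem_openSegment ℝ x (lineMap x y t)
    (show t⁻¹ ∈ Ioo 0 1 from ⟨inv_pos.2 ht0, inv_lt_one_of_one_lt₀ ht⟩)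
  rwa [lineMap_lineMap_right, inv_mul_cancel₀ ht0.ne', lineMap_apply_one] at this

/-- The point where the segment from `lineMap p q a` to `lineMap q r b` meets the line `pr`. -/
theorem Convex.lineMap_mul_div_mem {C : Set E} (hC : Convex ℝ C) {a b : ℝ} (ha : 0 < a)
    (hb : 1 ≤ b) (hA : lineMap p q a ∈ C) (hB : lineMap q r b ∈ C) :
    lineMap p r (a * b / (a + b - 1)) ∈ C := by
  have hab : 0 < a + b - 1 := by linarith
  have hmem := hC hA hB (div_nonneg (sub_nonneg.2 hb) hab.le) (div_nonneg ha.le hab.le)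
    (by field_simp; ring)
  convert hmem using 1
  simp only [lineMap_apply_module]
  match_scalars <;> field_simp <;> ring

theorem bddAbove_preimage_lineMap (hbd : Bornology.IsBounded Ω) (hpq : p ≠ q) :
    BddAbove (lineMap p q ⁻¹' Ω : Set ℝ) := by
  obtain ⟨R, hR⟩ := hbd.subset_closedBall p
  refine ⟨R / dist p q, fun t ht => ?_⟩
  have hdist : |t| * dist p q ≤ R := by
    simpa [dist_lineMap_left] using hR ht
  rw [le_div_iff₀ (dist_pos.2 hpq)]
  nlinarith [le_abs_self t, dist_nonneg (x := p) (y := q)]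

theorem one_lt_exitParam (hopen : IsOpen Ω) (hbd : Bornology.IsBounded Ω) (hq : q ∈ Ω)
    (hpq : p ≠ q) : 1 < exitParam Ω p q := by
  have hS : IsOpen (lineMap p q ⁻¹' Ω : Set ℝ) := hopen.preimage lineMap_continuous
  obtain ⟨t, ht1, htS⟩ := (hS.eventually_mem (show (1 : ℝ) ∈ _ by simpa using hq)).exists_gt
  exact ht1.trans_le (le_csSup (bddAbove_preimage_lineMap hbd hpq) htS)

theorem lineMap_exitParam_mem_frontier (hopen : IsOpen Ω) (hbd : Bornology.IsBounded Ω)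
    (hp : p ∈ Ω) (hpq : p ≠ q) : lineMap p q (exitParam Ω p q) ∈ frontier Ω := by
  set S : Set ℝ := lineMap p q ⁻¹' Ω
  have hS : IsOpen S := hopen.preimage lineMap_continuous
  have hbdd : BddAbove S := bddAbove_preimage_lineMap hbd hpq
  have hne : S.Nonempty := ⟨0, by simpa [S] using hp⟩
  rw [hopen.frontier_eq]
  refine ⟨map_mem_closure lineMap_continuous (csSup_mem_closure hne hbdd) fun _ h => h,
    fun hmem => ?_⟩
  obtain ⟨t, hlt, htS⟩ := (hS.eventually_mem (show sSup S ∈ S from hmem)).exists_gt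
  exact hlt.not_ge (le_csSup hbdd htS)

theorem le_exitParam_of_lineMap_mem_closure (hopen : IsOpen Ω) (hbd : Bornology.IsBounded Ω)
    (hconv : Convex ℝ Ω) (hp : p ∈ Ω) (hpq : p ≠ q) {t : ℝ} (ht : 0 < t)
    (hmem : lineMap p q t ∈ closure Ω) : t ≤ exitParam Ω p q := by
  have hsub : Ioo 0 t ⊆ lineMap p q ⁻¹' Ω := by
    intro u hu
    have hseg := lineMap_mem_openSegment ℝ p (lineMap p q t)
      (show u / t ∈ Ioo 0 1 from ⟨div_pos hu.1 ht, (div_lt_one ht).2 hu.2⟩)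
    rw [lineMap_lineMap_right, div_mul_cancel₀ _ ht.ne'] at hseg
    have := hconv.openSegment_interior_closure_subset_interior (by rwa [hopen.interior_eq]) hmem
      hseg
    rwa [hopen.interior_eq] at this
  calc t = sSup (Ioo 0 t) := (csSup_Ioo ht).symm
    _ ≤ exitParam Ω p q :=
      csSup_le_csSup (bddAbove_preimage_lineMap hbd hpq) (nonempty_Ioo.2 ht) hsub

theorem exitParam_mul_div_le (hopen : IsOpen Ω) (hbd : Bornology.IsBounded Ω)
    (hconv : Convex ℝ Ω) (hp : p ∈ Ω) (hq : q ∈ Ω) (hr : r ∈ Ω) (hpq : p ≠ q) (hqr : q ≠ r)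
    (hpr : p ≠ r) :
    exitParam Ω p q * exitParam Ω q r / (exitParam Ω p q + exitParam Ω q r - 1) ≤
      exitParam Ω p r := by
  have ha := one_lt_exitParam hopen hbd hq hpq
  have hb := one_lt_exitParam hopen hbd hr hqr
  refine le_exitParam_of_lineMap_mem_closure hopen hbd hconv hp hpr
    (div_pos (mul_pos (by linarith) (by linarith)) (by linarith)) ?_
  exact hconv.closure.lineMap_mul_div_mem (by linarith) hb.le
    (frontier_subset_closure (lineMap_exitParam_mem_frontier hopen hbd hp hpq))
    (frontier_subset_closure (lineMap_exitParam_mem_frontier hopen hbd hq hqr))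

theorem funkDist_pos (hopen : IsOpen Ω) (hbd : Bornology.IsBounded Ω) (hq : q ∈ Ω)
    (hpq : p ≠ q) : 0 < funkDist Ω p q := by
  have hσ := one_lt_exitParam hopen hbd hq hpq
  exact Real.log_pos ((one_lt_div (by linarith)).2 (by linarith))

theorem funkDist_triangle (hopen : IsOpen Ω) (hbd : Bornology.IsBounded Ω)
    (hconv : Convex ℝ Ω) (hp : p ∈ Ω) (hq : q ∈ Ω) (hr : r ∈ Ω) (hpq : p ≠ q) (hqr : q ≠ r)
    (hpr : p ≠ r) : funkDist Ω p r ≤ funkDist Ω p q + funkDist Ω q r := by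
  have ha := one_lt_exitParam hopen hbd hq hpq
  have hb := one_lt_exitParam hopen hbd hr hqr
  have hc := one_lt_exitParam hopen hbd hr hpr
  have habc := exitParam_mul_div_le hopen hbd hconv hp hq hr hpq hqr hpr
  set a := exitParam Ω p q
  set b := exitParam Ω q r
  set c := exitParam Ω p r
  rw [div_le_iff₀ (by linarith)] at habc
  simp only [funkDist]
  rw [← Real.log_mul (by positivity) (by positivity)]
  refine Real.log_le_log (by positivity) ?_
  rw [div_mul_div_comm, div_le_div_iff₀ (by linarith) (by nlinarith)]
  nlinarith

end Funk

theorem IsHilbertDistOn.eq_funkDist_add_funkDist {n : ℕ} {Ω : Set (EuclideanSpace ℝ (Fin n))}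
    {d : EuclideanSpace ℝ (Fin n) → EuclideanSpace ℝ (Fin n) → ℝ} (hd : IsHilbertDistOn Ω d)
    (hopen : IsOpen Ω) (hbd : Bornology.IsBounded Ω) {p q : EuclideanSpace ℝ (Fin n)}
    (hp : p ∈ Ω) (hq : q ∈ Ω) (hpq : p ≠ q) :
    d p q = funkDist Ω p q + funkDist Ω q p := by
  have hσ := one_lt_exitParam hopen hbd hq hpq
  have hτ := one_lt_exitParam hopen hbd hp hpq.symm
  have hpo : p ∈ openSegment ℝ (lineMap q p (exitParam Ω q p)) q := by
    rw [openSegment_symm]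
    exact mem_openSegment_lineMap q p hτ
  rw [hd.2 p hp q hq hpq _ _ (lineMap_exitParam_mem_frontier hopen hbd hq hpq.symm)
    (lineMap_exitParam_mem_frontier hopen hbd hp hpq) hpo (mem_openSegment_lineMap p q hσ),
    funkDist, funkDist, ← Real.log_mul (by positivity) (by positivity), mul_comm]
  simp only [dist_lineMap_left, dist_lineMap_right, dist_comm q p, Real.norm_eq_abs,
    abs_of_pos (one_pos.trans hσ), abs_of_pos (one_pos.trans hτ), abs_of_neg (sub_neg.2 hσ),
    abs_of_neg (sub_neg.2 hτ), neg_sub]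
  field_simp [dist_ne_zero.2 hpq]

theorem hilbert_dist_is_metric_general {n : ℕ} (Ω : Set (EuclideanSpace ℝ (Fin n)))
    (hopen : IsOpen Ω) (hbd : Bornology.IsBounded Ω) (hconv : Convex ℝ Ω)
    (d : EuclideanSpace ℝ (Fin n) → EuclideanSpace ℝ (Fin n) → ℝ)
    (hd : IsHilbertDistOn Ω d) :
    (∀ p ∈ Ω, ∀ q ∈ Ω, 0 ≤ d p q) ∧
    (∀ p ∈ Ω, ∀ q ∈ Ω, d p q = d q p) ∧
    (∀ p ∈ Ω, ∀ q ∈ Ω, (d p q = 0 ↔ p = q)) ∧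
    (∀ p ∈ Ω, ∀ q ∈ Ω, ∀ r ∈ Ω, d p r ≤ d p q + d q r) := by
  have hfunk {p q} (hp : p ∈ Ω) (hq : q ∈ Ω) (hpq : p ≠ q) :=
    hd.eq_funkDist_add_funkDist hopen hbd hp hq hpq
  have hpos : ∀ p ∈ Ω, ∀ q ∈ Ω, p ≠ q → 0 < d p q := fun p hp q hq hpq => by
    rw [hfunk hp hq hpq]
    exact add_pos (funkDist_pos hopen hbd hq hpq) (funkDist_pos hopen hbd hp hpq.symm)
  have hnonneg : ∀ p ∈ Ω, ∀ q ∈ Ω, 0 ≤ d p q := fun p hp q hq => by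
    rcases eq_or_ne p q with rfl | hpq
    · exact (hd.1 p hp).ge
    · exact (hpos p hp q hq hpq).le
  refine ⟨hnonneg, fun p hp q hq => ?_, fun p hp q hq => ?_, fun p hp q hq r hr => ?_⟩
  · rcases eq_or_ne p q with rfl | hpq
    · rfl
    · rw [hfunk hp hq hpq, hfunk hq hp hpq.symm, add_comm]
  · exact ⟨fun h => by_contra fun hpq => (hpos p hp q hq hpq).ne' h, fun h => h ▸ hd.1 p hp⟩
  · rcases eq_or_ne p q with rfl | hpq
    · simp [hd.1 p hp]
    rcases eq_or_ne q r with rfl | hqr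
    · simp [hd.1 q hq]
    rcases eq_or_ne p r with rfl | hpr
    · rw [hd.1 p hp]
      exact add_nonneg (hnonneg p hp q hq) (hnonneg q hq p hp)
    rw [hfunk hp hr hpr, hfunk hp hq hpq, hfunk hq hr hqr]
    linarith [funkDist_triangle hopen hbd hconv hp hq hr hpq hqr hpr,
      funkDist_triangle hopen hbd hconv hr hq hp hqr.symm hpq.symm hpr.symm]

/-- The Hilbert metric on a properly convex open domain (a bounded convex open subset of an
affine chart, modelled here in Euclidean space) satisfies the axioms of a metric on `Ω`:
nonnegativity, symmetry, identity of indiscernibles, and the triangle inequality. -/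
theorem hilbert_dist_is_metric {n : ℕ} (Ω : Set (EuclideanSpace ℝ (Fin n)))
    (hopen : IsOpen Ω) (hbd : Bornology.IsBounded Ω) (hconv : Convex ℝ Ω) (hne : Ω.Nonempty)
    (d : EuclideanSpace ℝ (Fin n) → EuclideanSpace ℝ (Fin n) → ℝ)
    (hd : IsHilbertDistOn Ω d) :
    (∀ p ∈ Ω, ∀ q ∈ Ω, 0 ≤ d p q) ∧
    (∀ p ∈ Ω, ∀ q ∈ Ω, d p q = d q p) ∧
    (∀ p ∈ Ω, ∀ q ∈ Ω, (d p q = 0 ↔ p = q)) ∧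
    (∀ p ∈ Ω, ∀ q ∈ Ω, ∀ r ∈ Ω, d p r ≤ d p q + d q r) :=
  hilbert_dist_is_metric_general Ω hopen hbd hconv d hd
end

section
/- Hilbert metrics converge under geometric convergence: if properly convex compact domains K_i converge geometrically to a properly convex compact domain K, and x_i ∈ K_i°, y_i ∈ K_i° converge to x, y ∈ K° respectively, then d_{K_i°}(x_i, y_i) → d_{K°}(x, y), where d denotes the Hilbert metric of the respective open domain. -/
/-!
For `p ≠ q` the Hilbert distance is the logarithm of the cross ratio of `p`, `q` and the two
ends of the chord through them. Under Hausdorff convergence of convex bodies, each point of the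
interior of the limit eventually lies in the `K i` and each point outside the limit eventually
lies outside them, so the chord ends converge; when `x₀ ≠ y₀` the cross ratios converge with
them. When `x₀ = y₀`, a fixed ball around `x₀` eventually lies in every `K i`, so the chord ends
stay a definite distance from `x i` and `y i` while `dist (x i) (y i) → 0`, and the cross ratio
is squeezed to `1`.
-/

open Set Filter Topology

open AffineMap Metric Bornology

theorem csSup_notMem_interior {α : Type*} [ConditionallyCompleteLinearOrder α]
    [TopologicalSpace α] [OrderTopology α] [DenselyOrdered α] [NoMaxOrder α] {S : Set α}
    (hS : BddAbove S) : sSup S ∉ interior S := fun h => by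
  obtain ⟨b, hb, hbS⟩ := ((frequently_gt_nhds (sSup S)).and_eventually
    (mem_interior_iff_mem_nhds.1 h)).exists
  exact (le_csSup hS hbS).not_gt hb

section Chord

variable {E : Type*} [NormedAddCommGroup E] [NormedSpace ℝ E] {K : Set E} {p q : E} {t : ℝ}

noncomputable def chordParam (K : Set E) (p q : E) : ℝ :=
  sSup (lineMap p q ⁻¹' K)

noncomputable def chordEnd (K : Set E) (p q : E) : E :=
  lineMap p q (chordParam K p q)

theorem isCompact_preimage_lineMap (hK : IsCompact K) (hpq : p ≠ q) :
    IsCompact (lineMap p q ⁻¹' K : Set ℝ) := by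
  have hanti : AntilipschitzWith (nndist p q)⁻¹ (lineMap p q : ℝ → E) :=
    AntilipschitzWith.of_le_mul_dist fun s t => by
      rw [dist_lineMap_lineMap, NNReal.coe_inv, coe_nndist,
        mul_comm (dist s t), inv_mul_cancel_left₀ (dist_ne_zero.2 hpq)]
  exact isCompact_of_isClosed_isBounded (hK.isClosed.preimage lineMap_continuous)
    (hanti.isBounded_preimage hK.isBounded)

theorem le_chordParam (hK : IsCompact K) (hpq : p ≠ q) (ht : lineMap p q t ∈ K) :
    t ≤ chordParam K p q :=
  le_csSup (isCompact_preimage_lineMap hK hpq).bddAbove ht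

theorem chordEnd_mem (hK : IsCompact K) (hpq : p ≠ q) (hq : q ∈ K) : chordEnd K p q ∈ K :=
  (isCompact_preimage_lineMap hK hpq).sSup_mem ⟨1, by simpa using hq⟩

theorem one_le_chordParam (hK : IsCompact K) (hpq : p ≠ q) (hq : q ∈ K) :
    1 ≤ chordParam K p q :=
  le_chordParam hK hpq (by simpa using hq)

theorem chordEnd_notMem_interior (hK : IsCompact K) (hpq : p ≠ q) :
    chordEnd K p q ∉ interior K := fun h =>
  csSup_notMem_interior (isCompact_preimage_lineMap hK hpq).bddAbove
    (preimage_interior_subset_interior_preimage lineMap_continuous h)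

theorem one_lt_chordParam (hK : IsCompact K) (hpq : p ≠ q) (hq : q ∈ interior K) :
    1 < chordParam K p q :=
  (one_le_chordParam hK hpq (interior_subset hq)).lt_of_ne fun h =>
    chordEnd_notMem_interior hK hpq (by rwa [chordEnd, ← h, lineMap_apply_one])

theorem lineMap_mem_openSegment_lineMap {T : ℝ} (ht : 0 < t) (htT : t < T) :
    lineMap p q t ∈ openSegment ℝ p (lineMap p q T) := by
  have hT : 0 < T := ht.trans htT
  simpa [div_mul_cancel₀ t hT.ne'] using
    lineMap_mem_openSegment ℝ p (lineMap p q T) ⟨div_pos ht hT, (div_lt_one hT).2 htT⟩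

theorem mem_openSegment_chordEnd (hK : IsCompact K) (hpq : p ≠ q) (hq : q ∈ interior K) :
    q ∈ openSegment ℝ p (chordEnd K p q) := by
  simpa [chordEnd] using lineMap_mem_openSegment_lineMap (p := p) (q := q) one_pos
    (one_lt_chordParam hK hpq hq)

theorem mem_openSegment_chordEnd_left (hK : IsCompact K) (hpq : p ≠ q) (hp : p ∈ interior K) :
    p ∈ openSegment ℝ (chordEnd K q p) q := by
  rw [openSegment_symm]
  exact mem_openSegment_chordEnd hK hpq.symm hp

theorem chordEnd_ne_of_mem_interior (hK : IsCompact K) (hpq : p ≠ q) {w : E}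
    (hw : w ∈ interior K) : chordEnd K p q ≠ w :=
  fun h => chordEnd_notMem_interior hK hpq (h ▸ hw)

theorem lineMap_mem_interior_of_lt_chordParam (hK : IsCompact K) (hKconv : Convex ℝ K)
    (hpq : p ≠ q) (hp : p ∈ interior K) (hq : q ∈ K) (ht : 0 < t) (htT : t < chordParam K p q) :
    lineMap p q t ∈ interior K :=
  hKconv.openSegment_interior_closure_subset_interior hp (subset_closure (chordEnd_mem hK hpq hq))
    (lineMap_mem_openSegment_lineMap ht htT)

theorem chordParam_lt_of_notMem (hK : IsCompact K) (hKconv : Convex ℝ K) (hpq : p ≠ q)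
    (hp : p ∈ K) (hq : q ∈ K) (ht : 0 ≤ t) (htK : lineMap p q t ∉ K) :
    chordParam K p q < t := by
  have hord : OrdConnected (lineMap p q ⁻¹' K : Set ℝ) :=
    (hKconv.affine_preimage (lineMap p q)).ordConnected
  have hT : chordParam K p q ∈ lineMap p q ⁻¹' K := chordEnd_mem hK hpq hq
  exact lt_of_not_ge fun h => htK (hord.out (by simpa using hp) hT ⟨ht, h⟩)

theorem chordEnd_mem_frontier_interior (hK : IsCompact K) (hKconv : Convex ℝ K) (hpq : p ≠ q)
    (hp : p ∈ interior K) (hq : q ∈ interior K) : chordEnd K p q ∈ frontier (interior K) := by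
  rw [isOpen_interior.frontier_eq, hKconv.closure_interior_eq_closure_of_nonempty_interior ⟨p, hp⟩]
  exact ⟨subset_closure (chordEnd_mem hK hpq (interior_subset hq)), chordEnd_notMem_interior hK hpq⟩

end Chord

section Hausdorff

variable {ι : Type*} {l : Filter ι}

theorem eventually_notMem_of_tendsto_hausdorffDist {α : Type*} [PseudoMetricSpace α]
    {K : ι → Set α} {L : Set α} (hKb : ∀ i, IsBounded (K i)) (hLc : IsClosed L)
    (hLb : IsBounded L) (hLne : L.Nonempty)
    (hKL : Tendsto (fun i => hausdorffDist (K i) L) l (𝓝 0)) {w : ι → α} {z : α}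
    (hz : z ∉ L) (hw : Tendsto w l (𝓝 z)) : ∀ᶠ i in l, w i ∉ K i := by
  have hδ : 0 < infDist z L := (hLc.notMem_iff_infDist_pos hLne).1 hz
  filter_upwards [hKL.eventually_lt_const (half_pos hδ), hw (ball_mem_nhds z (half_pos hδ))]
    with i hH hwi hwK
  have hnear : infDist (w i) L ≤ hausdorffDist (K i) L :=
    infDist_le_hausdorffDist_of_mem hwK
      (hausdorffEDist_ne_top_of_nonempty_of_bounded ⟨_, hwK⟩ hLne (hKb i) hLb)
  have hmove : infDist z L ≤ infDist (w i) L + dist z (w i) := infDist_le_infDist_add_dist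
  rw [mem_preimage, mem_ball, dist_comm] at hwi
  linarith

variable {F : Type*} [NormedAddCommGroup F] [InnerProductSpace ℝ F]

theorem le_dist_add_smul_of_inner_nonpos {c p u : F} (hu : ‖u‖ = 1)
    (h : inner ℝ (p - c) u ≤ 0) (s : ℝ) : s ≤ dist (c + s • u) p := by
  have hinner : inner ℝ (c + s • u - p) u = s - inner ℝ (p - c) u := by
    rw [show c + s • u - p = s • u - (p - c) by abel, inner_sub_left, real_inner_smul_left,
      real_inner_self_eq_norm_sq, hu, one_pow, mul_one]
  calc s ≤ inner ℝ (c + s • u - p) u := by rw [hinner]; linarith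
    _ ≤ ‖c + s • u - p‖ * ‖u‖ := real_inner_le_norm _ _
    _ = dist (c + s • u) p := by rw [hu, mul_one, dist_eq_norm]

theorem ball_subset_of_hausdorffDist_lt {C L : Set F} (hC : IsCompact C) (hCconv : Convex ℝ C)
    (hCne : C.Nonempty) (hL : IsBounded L) {z : F} {r ε : ℝ} (hball : ball z r ⊆ L)
    (hH : hausdorffDist L C < ε) : ball z (r - ε) ⊆ C := by
  intro w hw
  by_contra hwC
  -- Pushing `w` a distance `ε` away from its nearest point of `C` lands in `L`, yet farther
  -- than `ε` from `C`.
  obtain ⟨c, hc, hwc⟩ := hC.exists_infDist_eq_dist hCne w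
  have hd : 0 < dist w c := hwc ▸ (hC.isClosed.notMem_iff_infDist_pos hCne).1 hwC
  set u := (dist w c)⁻¹ • (w - c) with hu_def
  have hu : ‖u‖ = 1 := by
    rw [norm_smul, norm_inv, Real.norm_of_nonneg dist_nonneg, ← dist_eq_norm,
      inv_mul_cancel₀ hd.ne']
  have hproj : ∀ p ∈ C, inner ℝ (p - c) u ≤ 0 := by
    have hmin : ‖w - c‖ = ⨅ p : C, ‖w - (p : F)‖ := by
      simp_rw [← dist_eq_norm, ← hwc, infDist_eq_iInf]
    intro p hp
    rw [hu_def, real_inner_smul_right, real_inner_comm]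
    exact mul_nonpos_of_nonneg_of_nonpos (inv_nonneg.2 dist_nonneg)
      ((norm_eq_iInf_iff_real_inner_le_zero hCconv hc).1 hmin p hp)
  have hε : 0 < ε := hausdorffDist_nonneg.trans_lt hH
  have hv : c + (dist w c + ε) • u = w + ε • u := by
    rw [add_smul, hu_def, smul_inv_smul₀ hd.ne']
    abel
  have hvL : w + ε • u ∈ L := hball <| by
    rw [mem_ball] at hw ⊢
    calc dist (w + ε • u) z ≤ dist (w + ε • u) w + dist w z := dist_triangle _ _ _
      _ < ε + (r - ε) := by
        rw [dist_self_add_left, norm_smul, hu, mul_one, Real.norm_of_nonneg hε.le]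
        linarith
      _ = r := by ring
  obtain ⟨p, hp, hvp⟩ := exists_dist_lt_of_hausdorffDist_lt hvL hH
    (hausdorffEDist_ne_top_of_nonempty_of_bounded ⟨_, hvL⟩ hCne hL hC.isBounded)
  have hfar := le_dist_add_smul_of_inner_nonpos hu (hproj p hp) (dist w c + ε)
  rw [hv] at hfar
  linarith

theorem eventually_ball_subset_of_tendsto_hausdorffDist {K : ι → Set F} {L : Set F}
    (hKc : ∀ i, IsCompact (K i)) (hKconv : ∀ i, Convex ℝ (K i)) (hKne : ∀ i, (K i).Nonempty)
    (hL : IsBounded L)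
    (hKL : Tendsto (fun i => hausdorffDist (K i) L) l (𝓝 0)) {z : F} {r : ℝ} (hr : 0 < r)
    (hball : ball z r ⊆ L) : ∀ᶠ i in l, ball z (r / 2) ⊆ K i := by
  filter_upwards [hKL.eventually_lt_const (half_pos hr)] with i hi
  have := ball_subset_of_hausdorffDist_lt (hKc i) (hKconv i) (hKne i) hL hball
    (by rwa [hausdorffDist_comm])
  rwa [sub_half] at this

theorem eventually_mem_of_tendsto_hausdorffDist {K : ι → Set F} {L : Set F}
    (hKc : ∀ i, IsCompact (K i)) (hKconv : ∀ i, Convex ℝ (K i)) (hKne : ∀ i, (K i).Nonempty)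
    (hL : IsBounded L)
    (hKL : Tendsto (fun i => hausdorffDist (K i) L) l (𝓝 0)) {w : ι → F} {z : F}
    (hz : z ∈ interior L) (hw : Tendsto w l (𝓝 z)) : ∀ᶠ i in l, w i ∈ K i := by
  obtain ⟨r, hr, hball⟩ := Metric.isOpen_iff.1 isOpen_interior z hz
  filter_upwards [eventually_ball_subset_of_tendsto_hausdorffDist hKc hKconv hKne hL hKL hr
    (hball.trans interior_subset), hw (ball_mem_nhds z (half_pos hr))] with i hi hwi
  exact hi hwi

end Hausdorff

theorem Filter.Tendsto.eventually_ne_of_ne {ι X : Type*} [TopologicalSpace X] [T2Space X]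
    {l : Filter ι} {f g : ι → X} {a b : X} (hf : Tendsto f l (𝓝 a)) (hg : Tendsto g l (𝓝 b))
    (hab : a ≠ b) : ∀ᶠ i in l, f i ≠ g i :=
  (hf.prodMk_nhds hg).eventually (isClosed_diagonal.isOpen_compl.mem_nhds hab)

section ChordConvergence

variable {ι : Type*} {l : Filter ι} {F : Type*} [NormedAddCommGroup F] [InnerProductSpace ℝ F]
  {K : ι → Set F} {L : Set F} {x y : ι → F} {x₀ y₀ : F}

theorem tendsto_chordParam (hKc : ∀ i, IsCompact (K i)) (hKconv : ∀ i, Convex ℝ (K i))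
    (hLc : IsCompact L) (hLconv : Convex ℝ L)
    (hKL : Tendsto (fun i => hausdorffDist (K i) L) l (𝓝 0))
    (hx : ∀ i, x i ∈ K i) (hy : ∀ i, y i ∈ K i) (hx₀ : x₀ ∈ interior L) (hy₀ : y₀ ∈ L)
    (hxlim : Tendsto x l (𝓝 x₀)) (hylim : Tendsto y l (𝓝 y₀)) (hne : x₀ ≠ y₀) :
    Tendsto (fun i => chordParam (K i) (x i) (y i)) l (𝓝 (chordParam L x₀ y₀)) := by
  have hline (t : ℝ) : Tendsto (fun i => lineMap (x i) (y i) t) l (𝓝 (lineMap x₀ y₀ t)) :=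
    hxlim.lineMap hylim tendsto_const_nhds
  have hT₀ := one_le_chordParam hLc hne hy₀
  rw [tendsto_order]
  refine ⟨fun a ha => ?_, fun a ha => ?_⟩
  · obtain ⟨t, hat, htT⟩ := exists_between (max_lt ha (zero_lt_one.trans_le hT₀))
    have ht := lineMap_mem_interior_of_lt_chordParam hLc hLconv hne hx₀ hy₀
      ((le_max_right _ _).trans_lt hat) htT
    filter_upwards [eventually_mem_of_tendsto_hausdorffDist hKc hKconv (fun i => ⟨_, hx i⟩)
      hLc.isBounded hKL ht (hline t), hxlim.eventually_ne_of_ne hylim hne] with i hi hxyi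
    exact ((le_max_left _ _).trans_lt hat).trans_le (le_chordParam (hKc i) hxyi hi)
  · have hout : lineMap x₀ y₀ a ∉ L := fun h => ha.not_ge (le_chordParam hLc hne h)
    filter_upwards [eventually_notMem_of_tendsto_hausdorffDist (fun i => (hKc i).isBounded)
      hLc.isClosed hLc.isBounded ⟨_, hy₀⟩ hKL hout (hline a),
      hxlim.eventually_ne_of_ne hylim hne] with i hi hxyi
    exact chordParam_lt_of_notMem (hKc i) (hKconv i) hxyi (hx i) (hy i) (by linarith) hi

theorem tendsto_chordEnd (hKc : ∀ i, IsCompact (K i)) (hKconv : ∀ i, Convex ℝ (K i))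
    (hLc : IsCompact L) (hLconv : Convex ℝ L)
    (hKL : Tendsto (fun i => hausdorffDist (K i) L) l (𝓝 0))
    (hx : ∀ i, x i ∈ K i) (hy : ∀ i, y i ∈ K i) (hx₀ : x₀ ∈ interior L) (hy₀ : y₀ ∈ L)
    (hxlim : Tendsto x l (𝓝 x₀)) (hylim : Tendsto y l (𝓝 y₀)) (hne : x₀ ≠ y₀) :
    Tendsto (fun i => chordEnd (K i) (x i) (y i)) l (𝓝 (chordEnd L x₀ y₀)) :=
  hxlim.lineMap hylim
    (tendsto_chordParam hKc hKconv hLc hLconv hKL hx hy hx₀ hy₀ hxlim hylim hne)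

end ChordConvergence

section CrossRatio

noncomputable def crossRatio {α : Type*} [PseudoMetricSpace α] (o p q s : α) : ℝ :=
  dist o q / dist o p * (dist s p / dist s q)

theorem Filter.Tendsto.crossRatio {ι α : Type*} [MetricSpace α] {l : Filter ι}
    {o p q s : ι → α} {o₀ p₀ q₀ s₀ : α}
    (ho : Tendsto o l (𝓝 o₀)) (hp : Tendsto p l (𝓝 p₀)) (hq : Tendsto q l (𝓝 q₀))
    (hs : Tendsto s l (𝓝 s₀)) (hop : o₀ ≠ p₀) (hsq : s₀ ≠ q₀) :
    Tendsto (fun i => crossRatio (o i) (p i) (q i) (s i)) l (𝓝 (crossRatio o₀ p₀ q₀ s₀)) :=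
  ((ho.dist hq).div (ho.dist hp) (dist_ne_zero.2 hop)).mul
    ((hs.dist hp).div (hs.dist hq) (dist_ne_zero.2 hsq))

variable {E : Type*} [NormedAddCommGroup E] [NormedSpace ℝ E] {o p q s : E}

theorem crossRatio_eq_of_mem_openSegment (hp : p ∈ openSegment ℝ o q)
    (hq : q ∈ openSegment ℝ p s) (hop : o ≠ p) (hsq : s ≠ q) :
    crossRatio o p q s = (1 + dist p q / dist o p) * (1 + dist p q / dist s q) := by
  have hoq : dist o q = dist o p + dist p q :=
    (dist_add_dist_of_mem_segment (openSegment_subset_segment _ _ _ hp)).symm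
  have hsp : dist s p = dist s q + dist p q := by
    rw [dist_comm s p, dist_comm s q, add_comm]
    exact (dist_add_dist_of_mem_segment (openSegment_subset_segment _ _ _ hq)).symm
  rw [crossRatio, hoq, hsp, add_div, add_div, div_self (dist_ne_zero.2 hop),
    div_self (dist_ne_zero.2 hsq)]

theorem one_le_crossRatio (hp : p ∈ openSegment ℝ o q) (hq : q ∈ openSegment ℝ p s)
    (hop : o ≠ p) (hsq : s ≠ q) : 1 ≤ crossRatio o p q s := by
  rw [crossRatio_eq_of_mem_openSegment hp hq hop hsq]
  exact one_le_mul_of_one_le_of_one_le (le_add_of_nonneg_right (by positivity))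
    (le_add_of_nonneg_right (by positivity))

theorem log_crossRatio_le (hp : p ∈ openSegment ℝ o q) (hq : q ∈ openSegment ℝ p s) {m : ℝ}
    (hm : 0 < m) (hop : m ≤ dist o p) (hsq : m ≤ dist s q) :
    Real.log (crossRatio o p q s) ≤ 2 * dist p q / m := by
  have hlog (D : ℝ) (hD : m ≤ D) : Real.log (1 + dist p q / D) ≤ dist p q / m := by
    have hD0 : 0 < D := hm.trans_le hD
    calc Real.log (1 + dist p q / D) ≤ dist p q / D := by
          linarith [Real.log_le_sub_one_of_pos (show 0 < 1 + dist p q / D by positivity)]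
      _ ≤ dist p q / m := div_le_div_of_nonneg_left dist_nonneg hm hD
  rw [crossRatio_eq_of_mem_openSegment hp hq (dist_pos.1 (hm.trans_le hop))
      (dist_pos.1 (hm.trans_le hsq)),
    Real.log_mul (by positivity) (by positivity), mul_div_assoc]
  linarith [hlog _ hop, hlog _ hsq]

end CrossRatio

section Hilbert

variable {n : ℕ} {p q : EuclideanSpace ℝ (Fin n)}

theorem IsHilbertDistOn.eq_log_crossRatio_chordEnd {K : Set (EuclideanSpace ℝ (Fin n))}
    {d : EuclideanSpace ℝ (Fin n) → EuclideanSpace ℝ (Fin n) → ℝ}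
    (hd : IsHilbertDistOn (interior K) d) (hK : IsCompact K) (hKconv : Convex ℝ K)
    (hp : p ∈ interior K) (hq : q ∈ interior K) (hpq : p ≠ q) :
    d p q = Real.log (crossRatio (chordEnd K q p) p q (chordEnd K p q)) :=
  hd.2 p hp q hq hpq _ _ (chordEnd_mem_frontier_interior hK hKconv hpq.symm hq hp)
    (chordEnd_mem_frontier_interior hK hKconv hpq hp hq)
    (mem_openSegment_chordEnd_left hK hpq hp) (mem_openSegment_chordEnd hK hpq hq)

theorem IsHilbertDistOn.nonneg_and_le_of_ball {K : Set (EuclideanSpace ℝ (Fin n))}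
    {d : EuclideanSpace ℝ (Fin n) → EuclideanSpace ℝ (Fin n) → ℝ}
    (hd : IsHilbertDistOn (interior K) d) (hK : IsCompact K) (hKconv : Convex ℝ K)
    {z : EuclideanSpace ℝ (Fin n)} {r : ℝ} (hball : ball z r ⊆ interior K)
    (hp : p ∈ ball z (r / 2)) (hq : q ∈ ball z (r / 2)) :
    0 ≤ d p q ∧ d p q ≤ 4 * dist p q / r := by
  have hr : 0 < r := by linarith [pos_of_mem_ball hp]
  have hsub : ball z (r / 2) ⊆ interior K := (ball_subset_ball (half_le_self hr.le)).trans hball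
  rcases eq_or_ne p q with rfl | hpq
  · simp [hd.1 p (hsub hp)]
  have hfar : ∀ e ∈ frontier (interior K), ∀ w ∈ ball z (r / 2), r / 2 ≤ dist e w := by
    intro e he w hw
    have hez : r ≤ dist e z :=
      not_lt.1 fun h => he.2 (by rw [interior_interior]; exact hball (mem_ball.2 h))
    linarith [dist_triangle e w z, mem_ball.1 hw]
  have hp' := mem_openSegment_chordEnd_left hK hpq (hsub hp)
  have hq' := mem_openSegment_chordEnd hK hpq (hsub hq)
  have hop := hfar _ (chordEnd_mem_frontier_interior hK hKconv hpq.symm (hsub hq) (hsub hp)) p hp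
  have hsq := hfar _ (chordEnd_mem_frontier_interior hK hKconv hpq (hsub hp) (hsub hq)) q hq
  rw [hd.eq_log_crossRatio_chordEnd hK hKconv (hsub hp) (hsub hq) hpq]
  refine ⟨Real.log_nonneg (one_le_crossRatio hp' hq' ?_ ?_), ?_⟩
  · exact dist_pos.1 ((half_pos hr).trans_le hop)
  · exact dist_pos.1 ((half_pos hr).trans_le hsq)
  · calc _ ≤ 2 * dist p q / (r / 2) := log_crossRatio_le hp' hq' (half_pos hr) hop hsq
      _ = 4 * dist p q / r := by field_simp; ring

variable {ι : Type*} {l : Filter ι} {K : ι → Set (EuclideanSpace ℝ (Fin n))}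
  {L : Set (EuclideanSpace ℝ (Fin n))}
  {dK : ι → EuclideanSpace ℝ (Fin n) → EuclideanSpace ℝ (Fin n) → ℝ}
  {x y : ι → EuclideanSpace ℝ (Fin n)} {x₀ y₀ : EuclideanSpace ℝ (Fin n)}

theorem tendsto_hilbertDist_of_tendsto_same (hKc : ∀ i, IsCompact (K i))
    (hKconv : ∀ i, Convex ℝ (K i)) (hLc : IsCompact L)
    (hKL : Tendsto (fun i => hausdorffDist (K i) L) l (𝓝 0))
    (hdK : ∀ i, IsHilbertDistOn (interior (K i)) (dK i))
    (hx : ∀ i, x i ∈ interior (K i)) (hx₀ : x₀ ∈ interior L)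
    (hxlim : Tendsto x l (𝓝 x₀)) (hylim : Tendsto y l (𝓝 x₀)) :
    Tendsto (fun i => dK i (x i) (y i)) l (𝓝 0) := by
  obtain ⟨r, hr, hball⟩ := Metric.isOpen_iff.1 isOpen_interior x₀ hx₀
  have hKball : ∀ᶠ i in l, ball x₀ (r / 2) ⊆ interior (K i) :=
    (eventually_ball_subset_of_tendsto_hausdorffDist hKc hKconv
      (fun i => ⟨_, interior_subset (hx i)⟩) hLc.isBounded hKL hr
      (hball.trans interior_subset)).mono fun _ h => interior_maximal h isOpen_ball
  have hbounds : ∀ᶠ i in l,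
      0 ≤ dK i (x i) (y i) ∧ dK i (x i) (y i) ≤ 4 * dist (x i) (y i) / (r / 2) := by
    filter_upwards [hKball, hxlim (ball_mem_nhds x₀ (half_pos (half_pos hr))),
      hylim (ball_mem_nhds x₀ (half_pos (half_pos hr)))] with i hi hxi hyi
    exact (hdK i).nonneg_and_le_of_ball (hKc i) (hKconv i) hi hxi hyi
  have hlim : Tendsto (fun i => 4 * dist (x i) (y i) / (r / 2)) l (𝓝 0) := by
    simpa using ((hxlim.dist hylim).const_mul 4).div_const (r / 2)
  exact tendsto_of_tendsto_of_tendsto_of_le_of_le' tendsto_const_nhds hlim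
    (hbounds.mono fun _ h => h.1) (hbounds.mono fun _ h => h.2)

theorem tendsto_hilbertDist_of_ne (hKc : ∀ i, IsCompact (K i))
    (hKconv : ∀ i, Convex ℝ (K i)) (hLc : IsCompact L) (hLconv : Convex ℝ L)
    (hKL : Tendsto (fun i => hausdorffDist (K i) L) l (𝓝 0))
    {dL : EuclideanSpace ℝ (Fin n) → EuclideanSpace ℝ (Fin n) → ℝ}
    (hdK : ∀ i, IsHilbertDistOn (interior (K i)) (dK i)) (hdL : IsHilbertDistOn (interior L) dL)
    (hx : ∀ i, x i ∈ interior (K i)) (hy : ∀ i, y i ∈ interior (K i))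
    (hx₀ : x₀ ∈ interior L) (hy₀ : y₀ ∈ interior L)
    (hxlim : Tendsto x l (𝓝 x₀)) (hylim : Tendsto y l (𝓝 y₀)) (hne : x₀ ≠ y₀) :
    Tendsto (fun i => dK i (x i) (y i)) l (𝓝 (dL x₀ y₀)) := by
  have hxK : ∀ i, x i ∈ K i := fun i => interior_subset (hx i)
  have hyK : ∀ i, y i ∈ K i := fun i => interior_subset (hy i)
  have ho := tendsto_chordEnd hKc hKconv hLc hLconv hKL hyK hxK hy₀ (interior_subset hx₀)
    hylim hxlim hne.symm
  have hs := tendsto_chordEnd hKc hKconv hLc hLconv hKL hxK hyK hx₀ (interior_subset hy₀)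
    hxlim hylim hne
  have hcr := ho.crossRatio hxlim hylim hs (chordEnd_ne_of_mem_interior hLc hne.symm hx₀)
    (chordEnd_ne_of_mem_interior hLc hne hy₀)
  have hcr₀ := one_le_crossRatio (mem_openSegment_chordEnd_left hLc hne hx₀)
    (mem_openSegment_chordEnd hLc hne hy₀) (chordEnd_ne_of_mem_interior hLc hne.symm hx₀)
    (chordEnd_ne_of_mem_interior hLc hne hy₀)
  rw [hdL.eq_log_crossRatio_chordEnd hLc hLconv hx₀ hy₀ hne]
  refine (hcr.log (zero_lt_one.trans_le hcr₀).ne').congr' ?_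
  filter_upwards [hxlim.eventually_ne_of_ne hylim hne] with i hi
  exact ((hdK i).eq_log_crossRatio_chordEnd (hKc i) (hKconv i) (hx i) (hy i) hi).symm

end Hilbert

theorem hilbert_dist_converges_general {n : ℕ}
    (K : ℕ → Set (EuclideanSpace ℝ (Fin n))) (L : Set (EuclideanSpace ℝ (Fin n)))
    (hKc : ∀ i, IsCompact (K i)) (hKconv : ∀ i, Convex ℝ (K i))
    (hLc : IsCompact L) (hLconv : Convex ℝ L)
    (dK : ℕ → EuclideanSpace ℝ (Fin n) → EuclideanSpace ℝ (Fin n) → ℝ)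
    (dL : EuclideanSpace ℝ (Fin n) → EuclideanSpace ℝ (Fin n) → ℝ)
    (hdK : ∀ i, IsHilbertDistOn (interior (K i)) (dK i))
    (hdL : IsHilbertDistOn (interior L) dL)
    (hgc : Tendsto (fun i => Metric.hausdorffDist (K i) L) atTop (𝓝 0))
    (x y : ℕ → EuclideanSpace ℝ (Fin n)) (x₀ y₀ : EuclideanSpace ℝ (Fin n))
    (hx : ∀ i, x i ∈ interior (K i)) (hy : ∀ i, y i ∈ interior (K i))
    (hx₀ : x₀ ∈ interior L) (hy₀ : y₀ ∈ interior L)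
    (hxlim : Tendsto x atTop (𝓝 x₀)) (hylim : Tendsto y atTop (𝓝 y₀)) :
    Tendsto (fun i => dK i (x i) (y i)) atTop (𝓝 (dL x₀ y₀)) := by
  rcases eq_or_ne x₀ y₀ with rfl | hne
  · rw [hdL.1 x₀ hx₀]
    exact tendsto_hilbertDist_of_tendsto_same hKc hKconv hLc hgc hdK hx hx₀ hxlim hylim
  · exact tendsto_hilbertDist_of_ne hKc hKconv hLc hLconv hgc hdK hdL hx hy hx₀ hy₀ hxlim hylim hne

/-- Hilbert metrics converge under geometric convergence: if properly convex compact domains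
`K i` converge in the Hausdorff metric to a properly convex compact domain `L`, and points
`x i, y i` in the interiors of the `K i` converge to points `x₀, y₀` of the interior of `L`,
then the Hilbert distances `d_{K i°}(x i, y i)` converge to `d_{L°}(x₀, y₀)`. -/
theorem hilbert_dist_converges {n : ℕ}
    (K : ℕ → Set (EuclideanSpace ℝ (Fin n))) (L : Set (EuclideanSpace ℝ (Fin n)))
    (hKc : ∀ i, IsCompact (K i)) (hKconv : ∀ i, Convex ℝ (K i))
    (hKint : ∀ i, (interior (K i)).Nonempty)
    (hLc : IsCompact L) (hLconv : Convex ℝ L) (hLint : (interior L).Nonempty)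
    (dK : ℕ → EuclideanSpace ℝ (Fin n) → EuclideanSpace ℝ (Fin n) → ℝ)
    (dL : EuclideanSpace ℝ (Fin n) → EuclideanSpace ℝ (Fin n) → ℝ)
    (hdK : ∀ i, IsHilbertDistOn (interior (K i)) (dK i))
    (hdL : IsHilbertDistOn (interior L) dL)
    (hgc : Tendsto (fun i => Metric.hausdorffDist (K i) L) atTop (𝓝 0))
    (x y : ℕ → EuclideanSpace ℝ (Fin n)) (x₀ y₀ : EuclideanSpace ℝ (Fin n))
    (hx : ∀ i, x i ∈ interior (K i)) (hy : ∀ i, y i ∈ interior (K i))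
    (hx₀ : x₀ ∈ interior L) (hy₀ : y₀ ∈ interior L)
    (hxlim : Tendsto x atTop (𝓝 x₀)) (hylim : Tendsto y atTop (𝓝 y₀)) :
    Tendsto (fun i => dK i (x i) (y i)) atTop (𝓝 (dL x₀ y₀)) :=
  hilbert_dist_converges_general K L hKc hKconv hLc hLconv dK dL hdK hdL hgc x y x₀ y₀ hx hy hx₀ hy₀
    hxlim hylim
end

section
/- For a properly convex open domain Ω in RP^n, the projection Π: Bd^Ag(Ω) → Bd(Ω) from the augmented boundary to the topological boundary, sending (x,h) to x, is a proper, surjective, continuous map; and the map D: Bd^Ag(Ω) → Bd^Ag(Ω*) sending (x,h) to (h,x) is a homeomorphism, where Ω* is the dual domain. -/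
open Set

variable {n : ℕ}

/-- The dual cone of a properly convex open cone `C ⊆ ℝ^{n+1}`. -/
def dualConeSet (C : Set (EuclideanSpace ℝ (Fin (n + 1)))) :
    Set (EuclideanSpace ℝ (Fin (n + 1)) →L[ℝ] ℝ) :=
  {φ | ∀ v ∈ closure C, v ≠ 0 → 0 < φ v}

/-- The augmented boundary of the properly convex domain `Ω` associated to the cone `C`,
modelled by unit representatives: pairs `(x, h)` of a unit vector `x` in the boundary of
the cone and a (normalized) supporting functional `h` of the cone at `x` (positive on `C`
and vanishing at `x`).  Each boundary point / supporting hyperplane of `Ω` has a unique such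
representative since `C` is properly convex. -/
def augBoundary (C : Set (EuclideanSpace ℝ (Fin (n + 1)))) :
    Set ((EuclideanSpace ℝ (Fin (n + 1))) × (EuclideanSpace ℝ (Fin (n + 1)) →L[ℝ] ℝ)) :=
  {p | ‖p.1‖ = 1 ∧ p.1 ∈ frontier C ∧ ‖p.2‖ = 1 ∧ (∀ w ∈ C, 0 < p.2 w) ∧ p.2 p.1 = 0}

/-- The boundary `Bd Ω`, modelled by unit vectors in the frontier of the cone `C`. -/
def bdDomain (C : Set (EuclideanSpace ℝ (Fin (n + 1)))) :
    Set (EuclideanSpace ℝ (Fin (n + 1))) :=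
  {v | ‖v‖ = 1 ∧ v ∈ frontier C}

/-- The augmented boundary of the dual domain `Ω*`: pairs `(h, x)` of a unit functional `h`
in the boundary of the dual cone and a unit vector `x` giving a supporting hyperplane of
`Ω*` at `h` (evaluation at `x` is positive on `C*` and vanishes at `h`). -/
def augBoundaryDual (C : Set (EuclideanSpace ℝ (Fin (n + 1)))) :
    Set ((EuclideanSpace ℝ (Fin (n + 1)) →L[ℝ] ℝ) × (EuclideanSpace ℝ (Fin (n + 1)))) :=
  {q | ‖q.1‖ = 1 ∧ q.1 ∈ frontier (dualConeSet C) ∧ ‖q.2‖ = 1 ∧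
    (∀ ψ ∈ dualConeSet C, 0 < ψ q.2) ∧ q.1 q.2 = 0}

/-!
Because `C` is open, a nonzero functional that is nonnegative on `C` is positive on it (an open set
cannot contain a local minimum of a nonzero linear map). Hence the augmented boundary is a closed
subset of a product of unit spheres, so it is compact and the projection is proper; supporting
functionals exist by Hahn–Banach.

For the duality, proper convexity yields a functional positive on `closure C \ {0}`: an interior
point of the inner dual cone of `closure C`, whose affine span is everything since a vector
orthogonal to it would lie in `closure C ∩ -closure C` by the bipolar theorem. Perturbing by this
functional shows that `closure (dualConeSet C)` is the cone of functionals nonnegative on `C`, and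
by Farkas' lemma a vector on which every element of `dualConeSet C` is positive lies in `closure C`.
These two facts are what is needed to exchange the roles of `x` and `h`.
-/

open Filter Topology
open scoped RealInnerProductSpace

section Cone

variable {E : Type*} [NormedAddCommGroup E] [NormedSpace ℝ E]

theorem ContinuousLinearMap.pos_of_nonneg_on_isOpen {f : E →L[ℝ] ℝ} (hf : f ≠ 0) {U : Set E}
    (hU : IsOpen U) (hnonneg : ∀ u ∈ U, 0 ≤ f u) {w : E} (hw : w ∈ U) : 0 < f w := by
  refine (hnonneg w hw).lt_of_ne fun hfw => hf ?_
  have hmin : IsLocalMin f w :=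
    mem_of_superset (hU.mem_nhds hw) fun u hu => by simpa [← hfw] using hnonneg u hu
  exact hmin.hasFDerivAt_eq_zero f.hasFDerivAt

variable {C : Set E}

theorem zero_mem_closure_of_smul_mem (hne : C.Nonempty)
    (hcone : ∀ v ∈ C, ∀ t : ℝ, 0 < t → t • v ∈ C) : (0 : E) ∈ closure C := by
  obtain ⟨x, hx⟩ := hne
  have hcont : ContinuousWithinAt (· • x) (Ioi (0 : ℝ)) 0 := by fun_prop
  simpa using closure_mono (image_subset_iff.2 fun t ht => hcone x hx t ht)
    (hcont.mem_closure_image (by simp))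

theorem exists_properCone_coe_eq_closure (hne : C.Nonempty) (hconv : Convex ℝ C)
    (hcone : ∀ v ∈ C, ∀ t : ℝ, 0 < t → t • v ∈ C) :
    ∃ K : ProperCone ℝ E, (K : Set E) = closure C := by
  have hhull : (ConvexCone.hull ℝ C : Set E) = C := by
    refine Subset.antisymm (fun x hx => ?_) ConvexCone.subset_hull
    obtain ⟨r, hr, y, hy, rfl⟩ := (ConvexCone.mem_hull_of_convex hconv).1 hx
    exact hcone y hy r hr
  lift (ConvexCone.hull ℝ C).closure to ProperCone ℝ E using
    ⟨by simpa [hhull] using hne.closure, by simp⟩ with K hK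
  exact ⟨K, (congrArg SetLike.coe hK).trans (by simp [hhull])⟩

theorem isClosed_setOf_forall_nonneg (s : Set E) :
    IsClosed {φ : E →L[ℝ] ℝ | ∀ v ∈ s, 0 ≤ φ v} := by
  simp only [ofPred_forall]
  exact isClosed_iInter fun v => isClosed_iInter fun _ =>
    isClosed_le continuous_const (ContinuousLinearMap.apply ℝ ℝ v).continuous

theorem exists_supporting_functional (hopen : IsOpen C) (hconv : Convex ℝ C)
    (hcone : ∀ v ∈ C, ∀ t : ℝ, 0 < t → t • v ∈ C) {x : E} (hx : x ∈ frontier C) :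
    ∃ h : E →L[ℝ] ℝ, ‖h‖ = 1 ∧ (∀ w ∈ C, 0 < h w) ∧ h x = 0 := by
  have hxC : x ∉ C := fun hxC => hx.2 (by rwa [hopen.interior_eq])
  obtain ⟨f, hf⟩ := geometric_hahn_banach_open_point hconv hopen hxC
  have hfC : ∀ a ∈ C, f a ≤ 0 := fun a ha => by
    by_contra! hpos
    have hfa := hf a ha
    have := hf _ (hcone a ha _ (div_pos (by linarith) hpos))
    rw [map_smul, smul_eq_mul, div_mul_cancel₀ _ hpos.ne'] at this
    linarith
  have hxcl : x ∈ closure C := frontier_subset_closure hx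
  have hne : C.Nonempty := closure_nonempty_iff.1 ⟨x, hxcl⟩
  have hfx : f x = 0 := by
    refine le_antisymm ?_ ?_
    · exact closure_minimal hfC (isClosed_le f.continuous continuous_const) hxcl
    · simpa using closure_minimal (t := {y | f y ≤ f x}) (fun a ha => (hf a ha).le)
        (isClosed_le f.continuous continuous_const) (zero_mem_closure_of_smul_mem hne hcone)
  have hfneg : ∀ w ∈ C, 0 < (-f) w := fun w hw => by simpa [hfx] using hf w hw
  have hf0 : -f ≠ 0 := fun h0 => by simpa [h0] using hfneg _ hne.some_mem
  refine ⟨‖-f‖⁻¹ • -f, norm_smul_inv_norm hf0, fun w hw => ?_, by simp [hfx]⟩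
  simpa using mul_pos (inv_pos.2 (norm_pos_iff.2 hf0)) (hfneg w hw)

end Cone

section InnerDual

variable {E : Type*} [NormedAddCommGroup E] [InnerProductSpace ℝ E] [FiniteDimensional ℝ E]

theorem ProperCone.exists_forall_inner_pos (K : ProperCone ℝ E)
    (hK : (K : Set E) ∩ -K ⊆ {0}) :
    ∃ e : E, ∀ v ∈ K, v ≠ 0 → 0 < ⟪v, e⟫ := by
  set D := innerDual (K : Set E)
  have hspan : affineSpan ℝ (D : Set E) = ⊤ := by
    by_contra h
    rw [AffineSubspace.affineSpan_eq_top_iff_vectorSpan_eq_top_of_nonempty ℝ E E D.nonempty] at h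
    obtain ⟨u, hu, hu0⟩ :=
      Submodule.exists_mem_ne_zero_of_ne_bot (mt Submodule.orthogonal_eq_bot_iff.1 h)
    have hperp : ∀ y ∈ D, ⟪y, u⟫ = 0 := fun y hy =>
      (Submodule.mem_orthogonal _ u).1 hu y (by simpa using vsub_mem_vectorSpan ℝ hy D.zero_mem)
    have hmem : ∀ w, (∀ y ∈ D, ⟪y, w⟫ = 0) → w ∈ K := fun w hw => by
      rw [← innerDual_innerDual K]
      exact fun y hy => (hw y hy).ge
    exact hu0 (hK ⟨hmem u hperp, hmem (-u) fun y hy => by simp [inner_neg_right, hperp y hy]⟩)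
  obtain ⟨e, he⟩ := D.convex.interior_nonempty_iff_affineSpan_eq_top.2 hspan
  refine ⟨e, fun v hv hv0 => ?_⟩
  have hv' : innerSL ℝ v ≠ 0 := by
    rw [← norm_ne_zero_iff, innerSL_apply_norm]; exact norm_ne_zero_iff.2 hv0
  simpa using ContinuousLinearMap.pos_of_nonneg_on_isOpen hv' isOpen_interior
    (fun y hy => by simpa using interior_subset hy hv) he

end InnerDual

section Duality

variable {C : Set (EuclideanSpace ℝ (Fin (n + 1)))}

theorem dualConeSet_nonempty (hne : C.Nonempty) (hconv : Convex ℝ C)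
    (hcone : ∀ v ∈ C, ∀ t : ℝ, 0 < t → t • v ∈ C)
    (hproper : closure C ∩ -closure C ⊆ {0}) :
    (dualConeSet C).Nonempty := by
  obtain ⟨K, hK⟩ := exists_properCone_coe_eq_closure hne hconv hcone
  obtain ⟨e, he⟩ := K.exists_forall_inner_pos (by rwa [hK])
  refine ⟨innerSL ℝ e, fun v hv hv0 => ?_⟩
  rw [← hK] at hv
  simpa [real_inner_comm] using he v hv hv0

theorem closure_dualConeSet (hdual : (dualConeSet C).Nonempty) :
    closure (dualConeSet C) = {φ | ∀ v ∈ C, 0 ≤ φ v} := by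
  refine Subset.antisymm
    (closure_minimal (fun φ hφ v hv => ?_) (isClosed_setOf_forall_nonneg C)) fun φ hφ => ?_
  · rcases eq_or_ne v 0 with rfl | hv0
    · simp
    · exact (hφ v (subset_closure hv) hv0).le
  obtain ⟨φ₀, hφ₀⟩ := hdual
  have hφcl : ∀ v ∈ closure C, 0 ≤ φ v := fun v hv =>
    closure_minimal (t := {v | 0 ≤ φ v}) hφ (isClosed_le continuous_const φ.continuous) hv
  have hlim : Tendsto (fun t : ℝ => φ + t • φ₀) (𝓝[>] 0) (𝓝 φ) := by
    have : Continuous fun t : ℝ => φ + t • φ₀ := by fun_prop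
    simpa using (this.tendsto 0).mono_left nhdsWithin_le_nhds
  refine mem_closure_of_tendsto hlim (eventually_nhdsWithin_of_forall fun t ht v hv hv0 => ?_)
  simpa using add_pos_of_nonneg_of_pos (hφcl v hv) (mul_pos ht (hφ₀ v hv hv0))

theorem mem_closure_of_forall_dualConeSet_pos (hne : C.Nonempty) (hconv : Convex ℝ C)
    (hcone : ∀ v ∈ C, ∀ t : ℝ, 0 < t → t • v ∈ C) (hdual : (dualConeSet C).Nonempty)
    {x : EuclideanSpace ℝ (Fin (n + 1))} (hx : ∀ ψ ∈ dualConeSet C, 0 < ψ x) :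
    x ∈ closure C := by
  obtain ⟨K, hK⟩ := exists_properCone_coe_eq_closure hne hconv hcone
  by_contra hxK
  obtain ⟨f, hfK, hfx⟩ :=
    K.hyperplane_separation_point (x₀ := x) (by rwa [← SetLike.mem_coe, hK])
  have hf : f ∈ closure (dualConeSet C) := by
    rw [closure_dualConeSet hdual]
    exact fun v hv => hfK v (by rw [← SetLike.mem_coe, hK]; exact subset_closure hv)
  obtain ⟨ψ, hψx, hψ⟩ := mem_closure_iff.1 hf {ψ | ψ x < 0}
    (isOpen_lt (ContinuousLinearMap.apply ℝ ℝ x).continuous continuous_const) hfx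
  exact (hx ψ hψ).not_gt hψx

theorem augBoundary_eq_of_isOpen (hopen : IsOpen C) :
    augBoundary C = {p | ‖p.1‖ = 1} ∩ Prod.fst ⁻¹' frontier C ∩ {p | ‖p.2‖ = 1} ∩
      Prod.snd ⁻¹' {φ | ∀ w ∈ C, 0 ≤ φ w} ∩
      {p : _ × (_ →L[ℝ] ℝ) | p.2 p.1 = 0} := by
  ext ⟨x, h⟩
  simp only [augBoundary, mem_inter_iff, mem_ofPred_eq, mem_preimage]
  refine ⟨fun ⟨hx1, hx, hh1, hpos, hhx⟩ =>
      ⟨⟨⟨⟨hx1, hx⟩, hh1⟩, fun w hw => (hpos w hw).le⟩, hhx⟩,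
    fun ⟨⟨⟨⟨hx1, hx⟩, hh1⟩, hnonneg⟩, hhx⟩ =>
      ⟨hx1, hx, hh1, fun w hw => ?_, hhx⟩⟩
  exact ContinuousLinearMap.pos_of_nonneg_on_isOpen (ne_zero_of_norm_ne_zero (by simp [hh1]))
    hopen hnonneg hw

theorem isCompact_augBoundary (hopen : IsOpen C) : IsCompact (augBoundary C) := by
  have hclosed : IsClosed (augBoundary C) := by
    rw [augBoundary_eq_of_isOpen hopen]
    exact ((((isClosed_eq (by fun_prop) continuous_const).inter
      (isClosed_frontier.preimage continuous_fst)).inter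
      (isClosed_eq (by fun_prop) continuous_const)).inter
      ((isClosed_setOf_forall_nonneg C).preimage continuous_snd)).inter
      (isClosed_eq (continuous_snd.clm_apply continuous_fst) continuous_const)
  refine ((isCompact_sphere 0 1).prod (isCompact_sphere 0 1)).of_isClosed_subset hclosed ?_
  rintro p ⟨hx1, -, hh1, -⟩
  simp [hx1, hh1]

theorem swap_mem_augBoundaryDual (hdual : (dualConeSet C).Nonempty) {p}
    (hp : p ∈ augBoundary C) : p.swap ∈ augBoundaryDual C := by
  obtain ⟨hx1, hx, hh1, hpos, hhx⟩ := hp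
  have hxcl : p.1 ∈ closure C := frontier_subset_closure hx
  have hx0 : p.1 ≠ 0 := ne_zero_of_norm_ne_zero (by simp [hx1])
  refine ⟨hh1, ⟨?_, fun hint => (interior_subset hint p.1 hxcl hx0).ne' hhx⟩, hx1,
    fun ψ hψ => hψ p.1 hxcl hx0, hhx⟩
  rw [closure_dualConeSet hdual]
  exact fun w hw => (hpos w hw).le

theorem swap_mem_augBoundary (hopen : IsOpen C) (hne : C.Nonempty) (hconv : Convex ℝ C)
    (hcone : ∀ v ∈ C, ∀ t : ℝ, 0 < t → t • v ∈ C) (hdual : (dualConeSet C).Nonempty)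
    {q}
    (hq : q ∈ augBoundaryDual C) : q.swap ∈ augBoundary C := by
  obtain ⟨hh1, hh, hx1, hxpos, hhx⟩ := hq
  have hnonneg : ∀ w ∈ C, 0 ≤ q.1 w := by
    have := frontier_subset_closure hh
    rwa [closure_dualConeSet hdual] at this
  have hpos : ∀ w ∈ C, 0 < q.1 w := fun w hw =>
    ContinuousLinearMap.pos_of_nonneg_on_isOpen (ne_zero_of_norm_ne_zero (by simp [hh1]))
      hopen hnonneg hw
  refine ⟨hx1, ?_, hh1, hpos, hhx⟩
  rw [hopen.frontier_eq]
  exact ⟨mem_closure_of_forall_dualConeSet_pos hne hconv hcone hdual hxpos,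
    fun hxC => (hpos _ hxC).ne' hhx⟩

end Duality

/-- For a properly convex open domain `Ω` (given by the properly convex open cone `C`):
the projection `Π : Bd^Ag Ω → Bd Ω`, `(x,h) ↦ x`, is a continuous, surjective, proper map;
and the map `D : (x,h) ↦ (h,x)` is a homeomorphism from `Bd^Ag Ω` onto `Bd^Ag Ω*`,
the augmented boundary of the dual domain. -/
theorem augmented_boundary_projection_and_duality
    (C : Set (EuclideanSpace ℝ (Fin (n + 1))))
    (hopen : IsOpen C) (hne : C.Nonempty) (hconv : Convex ℝ C)
    (hcone : ∀ v ∈ C, ∀ t : ℝ, 0 < t → t • v ∈ C)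
    (hproper : closure C ∩ -closure C ⊆ {0}) :
    (∀ p ∈ augBoundary C, p.1 ∈ bdDomain C) ∧
    (∀ b ∈ bdDomain C, ∃ p ∈ augBoundary C, p.1 = b) ∧
    Continuous (fun p : augBoundary C => (p.1).1) ∧
    IsProperMap (fun p : augBoundary C => (p.1).1) ∧
    ∃ D : augBoundary C ≃ₜ augBoundaryDual C,
      ∀ p : augBoundary C, (D p).1 = ((p.1).2, (p.1).1) := by
  have hdual := dualConeSet_nonempty hne hconv hcone hproper
  have : CompactSpace (augBoundary C) :=
    isCompact_iff_compactSpace.1 (isCompact_augBoundary hopen)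
  refine ⟨fun p hp => ⟨hp.1, hp.2.1⟩, fun b hb => ?_, by fun_prop, ?_, ?_⟩
  · obtain ⟨h, hh1, hpos, hhb⟩ := exists_supporting_functional hopen hconv hcone hb.2
    exact ⟨(b, h), ⟨hb.1, hb.2, hh1, hpos, hhb⟩, rfl⟩
  · exact Continuous.isProperMap (by fun_prop)
  · refine ⟨(Homeomorph.prodComm _ _).subtype fun p =>
      ⟨swap_mem_augBoundaryDual hdual, fun hp => ?_⟩, fun p => rfl⟩
    simpa using swap_mem_augBoundary hopen hne hconv hcone hdual hp
end
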